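/- arXiv:2007.08133 — 2 statements merged into one kernel-verified Lean document; each statement's English description precedes it below -/
import Mathlib

section
/- Let v, ṽ ∈ ℝ^d have all entries in (0,1] and Euclidean norm 1. Define w = v^{3/2}/(Σ_i v_i^{3/2}) and w̃ = ṽ^{3/2}/(Σ_i ṽ_i^{3/2}) (entrywise powers). Then ‖w̃ - w‖₂ ≤ (3/2)(1 + √d)·‖ṽ - v‖₂. -/
/-! Write `a = v^{3/2}`, `b = ṽ^{3/2}` with sums `S`, `T`. Then
`b / T - a / S = (b - a) / T + (T⁻¹ - S⁻¹) • a`. Since the entries lie in `[0, 1]` and the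
vectors are unit vectors, `S, T ≥ 1` (as `x² ≤ x^{3/2}`) and `‖a‖ ≤ 1` (as `x^{3/2} ≤ x`), so
the distance is at most `‖b - a‖ + |T - S|`. The map `x ↦ x^{3/2}` is `3/2`-Lipschitz on
`[0, 1]`, and Cauchy–Schwarz gives `|T - S| ≤ √d ‖b - a‖`. -/

open Finset

lemma Real.abs_rpow_sub_rpow_le {p x y : ℝ} (hp : 1 ≤ p) (hx : x ∈ Set.Icc (0 : ℝ) 1)
    (hy : y ∈ Set.Icc (0 : ℝ) 1) : |x ^ p - y ^ p| ≤ p * |x - y| := by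
  have hderiv (t : ℝ) (_ : t ∈ Set.Icc (0 : ℝ) 1) :
      HasDerivWithinAt (· ^ p) (p * t ^ (p - 1)) (Set.Icc 0 1) t :=
    (Real.hasDerivAt_rpow_const (Or.inr hp)).hasDerivWithinAt
  have hbound (t : ℝ) (ht : t ∈ Set.Icc (0 : ℝ) 1) : ‖p * t ^ (p - 1)‖ ≤ p := by
    rw [Real.norm_eq_abs, abs_of_nonneg (by have := ht.1; positivity)]
    exact mul_le_of_le_one_right (by linarith) (Real.rpow_le_one ht.1 ht.2 (by linarith))
  exact (convex_Icc 0 1).norm_image_sub_le_of_norm_hasDerivWithin_le hderiv hbound hy hx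

lemma Real.sqrt_sum_sq_le_of_abs_le {ι : Type*} (s : Finset ι) {f g : ι → ℝ} {c : ℝ} (hc : 0 ≤ c)
    (h : ∀ i ∈ s, |f i| ≤ c * |g i|) : √(∑ i ∈ s, f i ^ 2) ≤ c * √(∑ i ∈ s, g i ^ 2) := by
  rw [← Real.sqrt_sq hc, ← Real.sqrt_mul (sq_nonneg c), mul_sum]
  refine Real.sqrt_le_sqrt (sum_le_sum fun i hi => ?_)
  have := pow_le_pow_left₀ (abs_nonneg _) (h i hi) 2
  rwa [sq_abs, mul_pow, sq_abs] at this

lemma Real.abs_sum_le_sqrt_card_mul_sqrt_sum_sq {ι : Type*} (s : Finset ι) (f : ι → ℝ) :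
    |∑ i ∈ s, f i| ≤ √(#s) * √(∑ i ∈ s, f i ^ 2) := by
  rw [← Real.sqrt_mul (Nat.cast_nonneg _)]
  exact Real.abs_le_sqrt sq_sum_le_card_mul_sum_sq

lemma norm_inv_smul_sub_inv_smul_le {E : Type*} [NormedAddCommGroup E] [NormedSpace ℝ E]
    {a b : E} {s t : ℝ} (hs : 1 ≤ s) (ht : 1 ≤ t) (ha : ‖a‖ ≤ 1) :
    ‖t⁻¹ • b - s⁻¹ • a‖ ≤ ‖b - a‖ + |t - s| := by
  have hsplit : t⁻¹ • b - s⁻¹ • a = t⁻¹ • (b - a) + (t⁻¹ - s⁻¹) • a := by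
    rw [smul_sub, sub_smul]; abel
  have hcoef : |t⁻¹ - s⁻¹| ≤ |t - s| := by
    rw [inv_sub_inv (by positivity) (by positivity), abs_div, abs_sub_comm,
      abs_of_pos (by positivity : 0 < t * s)]
    exact div_le_self (abs_nonneg _) (one_le_mul_of_one_le_of_one_le ht hs)
  calc ‖t⁻¹ • b - s⁻¹ • a‖ ≤ ‖t⁻¹ • (b - a)‖ + ‖(t⁻¹ - s⁻¹) • a‖ := hsplit ▸ norm_add_le _ _
    _ ≤ ‖b - a‖ + |t - s| := by
      rw [norm_smul, norm_smul, Real.norm_eq_abs, Real.norm_eq_abs, abs_inv,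
        abs_of_pos (by positivity : 0 < t)]
      gcongr
      · exact inv_mul_le_of_le_mul₀ (by positivity) (by positivity)
          (le_mul_of_one_le_left (norm_nonneg _) ht)
      · exact mul_le_of_le_one_right (abs_nonneg _) ha |>.trans hcoef

lemma EuclideanSpace.norm_toLp_eq_sqrt_sum_sq {ι : Type*} [Fintype ι] (f : ι → ℝ) :
    ‖(WithLp.toLp 2 f : EuclideanSpace ℝ ι)‖ = √(∑ i, f i ^ 2) := by
  simp [EuclideanSpace.norm_eq]

section UnitVector

variable {ι : Type*} [Fintype ι] {v : ι → ℝ} {p : ℝ}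

lemma one_le_sum_rpow_of_sum_sq_eq_one (hp : p ≤ 2) (hv : ∀ i, 0 < v i ∧ v i ≤ 1)
    (hv2 : ∑ i, v i ^ 2 = 1) : 1 ≤ ∑ i, v i ^ p := by
  rw [← hv2]
  refine sum_le_sum fun i _ => ?_
  rw [← Real.rpow_two]
  exact Real.rpow_le_rpow_of_exponent_ge (hv i).1 (hv i).2 hp

lemma sqrt_sum_sq_rpow_le_one (hp : 1 ≤ p) (hv : ∀ i, 0 < v i ∧ v i ≤ 1)
    (hv2 : ∑ i, v i ^ 2 = 1) : √(∑ i, (v i ^ p) ^ 2) ≤ 1 := by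
  rw [Real.sqrt_le_one, ← hv2]
  refine sum_le_sum fun i _ => pow_le_pow_left₀ (Real.rpow_nonneg (hv i).1.le p) ?_ 2
  simpa using Real.rpow_le_rpow_of_exponent_ge (hv i).1 (hv i).2 hp

end UnitVector

theorem stmt_4 (d : ℕ) (v w : Fin d → ℝ)
    (hv : ∀ i, 0 < v i ∧ v i ≤ 1) (hw : ∀ i, 0 < w i ∧ w i ≤ 1)
    (hvn : Real.sqrt (∑ i, (v i) ^ 2) = 1) (hwn : Real.sqrt (∑ i, (w i) ^ 2) = 1) :
    Real.sqrt (∑ i, ((w i) ^ ((3 : ℝ) / 2) / (∑ j, (w j) ^ ((3 : ℝ) / 2))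
        - (v i) ^ ((3 : ℝ) / 2) / (∑ j, (v j) ^ ((3 : ℝ) / 2))) ^ 2)
      ≤ (3 / 2) * (1 + Real.sqrt d) * Real.sqrt (∑ i, (w i - v i) ^ 2) := by
  set a : EuclideanSpace ℝ (Fin d) := WithLp.toLp 2 fun i => v i ^ ((3 : ℝ) / 2)
  set b : EuclideanSpace ℝ (Fin d) := WithLp.toLp 2 fun i => w i ^ ((3 : ℝ) / 2)
  have hv2 := Real.sqrt_eq_one.1 hvn
  have hw2 := Real.sqrt_eq_one.1 hwn
  have hS := one_le_sum_rpow_of_sum_sq_eq_one (p := 3 / 2) (by norm_num) hv hv2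
  have hT := one_le_sum_rpow_of_sum_sq_eq_one (p := 3 / 2) (by norm_num) hw hw2
  have ha : ‖a‖ ≤ 1 := by
    rw [EuclideanSpace.norm_toLp_eq_sqrt_sum_sq]
    exact sqrt_sum_sq_rpow_le_one (by norm_num) hv hv2
  have hba : ‖b - a‖ ≤ 3 / 2 * √(∑ i, (w i - v i) ^ 2) := by
    rw [← WithLp.toLp_sub, EuclideanSpace.norm_toLp_eq_sqrt_sum_sq]
    exact Real.sqrt_sum_sq_le_of_abs_le _ (by norm_num) fun i _ =>
      Real.abs_rpow_sub_rpow_le (by norm_num) ⟨(hw i).1.le, (hw i).2⟩ ⟨(hv i).1.le, (hv i).2⟩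
  have hTS : |∑ i, w i ^ ((3 : ℝ) / 2) - ∑ i, v i ^ ((3 : ℝ) / 2)| ≤ √d * ‖b - a‖ := by
    rw [← sum_sub_distrib, ← WithLp.toLp_sub, EuclideanSpace.norm_toLp_eq_sqrt_sum_sq]
    simpa using Real.abs_sum_le_sqrt_card_mul_sqrt_sum_sq univ
      fun i => w i ^ ((3 : ℝ) / 2) - v i ^ ((3 : ℝ) / 2)
  have hnormalized := norm_inv_smul_sub_inv_smul_le hS hT ha (b := b)
  rw [← WithLp.toLp_smul, ← WithLp.toLp_smul, ← WithLp.toLp_sub,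
    EuclideanSpace.norm_toLp_eq_sqrt_sum_sq] at hnormalized
  simp only [Pi.sub_apply, Pi.smul_apply, smul_eq_mul, ← div_eq_inv_mul] at hnormalized
  calc _ ≤ ‖b - a‖ + √d * ‖b - a‖ := hnormalized.trans (by gcongr)
    _ = (1 + √d) * ‖b - a‖ := by ring
    _ ≤ (1 + √d) * (3 / 2 * √(∑ i, (w i - v i) ^ 2)) := by gcongr
    _ = _ := by ring
end

section
/- Let A = [a_1,…,a_r] ∈ ℝ^{d×r} have σ_r(A) > 0 and let x ∈ ℝ^d. Define the matrix A^{⊙2} ∈ ℝ^{d²×r} whose i-th column is vec(a_i a_iᵀ). Then σ_r(A^{⊙2}) ≥ σ_r(A)² > 0; in particular A^{⊙2} has full column rank, so for any b ∈ ℝ^{d²} the least squares problem min_{ξ∈ℝ^r} ‖A^{⊙2} ξ - b‖₂ has a unique solution. -/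
/-!
The `(k, l)` entry of `A^{⊙2} x` is the `k`-th entry of `A (a_l ∘ x)`, where `a_l` is the `l`-th
row of `A`. If `σ ‖y‖ ≤ ‖A y‖` for all `y` (with `σ = σ_r(A)`, which in particular bounds every
column norm `‖A e_j‖` from below), then
`‖A^{⊙2} x‖² = ∑_l ‖A (a_l ∘ x)‖² ≥ σ² ∑_l ‖a_l ∘ x‖² = σ² ∑_j ‖A e_j‖² x_j² ≥ σ⁴ ‖x‖²`.
For a matrix with `r` columns, the subspace in the definition of `sval A r` must be the whole
space, so `sval A r` is the largest such `σ`. The bound makes `A^{⊙2}` injective, and the least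
squares solution is the preimage of the orthogonal projection of `b` onto its range.
-/

open Matrix

noncomputable def sval {m n : Type*} [Fintype m] [Fintype n] (A : Matrix m n ℝ) (i : ℕ) : ℝ :=
  sSup {c : ℝ | 0 ≤ c ∧ ∃ V : Submodule ℝ (EuclideanSpace ℝ n),
    i ≤ Module.finrank ℝ V ∧
    ∀ x : EuclideanSpace ℝ n, x ∈ V →
      c * ‖x‖ ≤ ‖(EuclideanSpace.equiv m ℝ).symm (A.mulVec ((EuclideanSpace.equiv n ℝ) x))‖}

open Function

section LeastSquares

variable {E F : Type*} [AddCommGroup E] [Module ℝ E] [NormedAddCommGroup F] [InnerProductSpace ℝ F]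

theorem Submodule.norm_sub_sq_eq_add_starProjection (K : Submodule ℝ F)
    [K.HasOrthogonalProjection] (b : F) {w : F} (hw : w ∈ K) :
    ‖w - b‖ ^ 2 = ‖w - K.starProjection b‖ ^ 2 + ‖K.starProjection b - b‖ ^ 2 := by
  have hK : w - K.starProjection b ∈ K := K.sub_mem hw (K.starProjection_apply_mem b)
  have hKperp : K.starProjection b - b ∈ Kᗮ := by
    simpa using Kᗮ.neg_mem (K.sub_starProjection_mem_orthogonal b)
  have h := norm_add_sq_eq_norm_sq_add_norm_sq_real (K.inner_right_of_mem_orthogonal hK hKperp)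
  rw [sub_add_sub_cancel] at h
  simpa only [sq] using h

theorem LinearMap.existsUnique_norm_sub_le_of_injective [FiniteDimensional ℝ E] {f : E →ₗ[ℝ] F}
    (hf : Injective f) (b : F) : ∃! x, ∀ x', ‖f x - b‖ ≤ ‖f x' - b‖ := by
  set K := LinearMap.range f
  obtain ⟨x₀, hx₀⟩ : K.starProjection b ∈ K := K.starProjection_apply_mem b
  have pythagoras (x : E) : ‖f x - b‖ ^ 2 = ‖f x - f x₀‖ ^ 2 + ‖f x₀ - b‖ ^ 2 := by
    rw [hx₀]; exact K.norm_sub_sq_eq_add_starProjection b (LinearMap.mem_range_self f x)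
  have sq_le_sq_iff (x x' : E) : ‖f x - b‖ ≤ ‖f x' - b‖ ↔ ‖f x - b‖ ^ 2 ≤ ‖f x' - b‖ ^ 2 :=
    (pow_le_pow_iff_left₀ (norm_nonneg _) (norm_nonneg _) two_ne_zero).symm
  refine ⟨x₀, fun x' => ?_, fun x hx => hf ?_⟩
  · rw [sq_le_sq_iff, pythagoras x']
    simp
  · have h := (sq_le_sq_iff x x₀).1 (hx x₀)
    rw [pythagoras x] at h
    have : ‖f x - f x₀‖ ^ 2 = 0 := le_antisymm (by linarith) (sq_nonneg _)
    simpa [sub_eq_zero] using this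

end LeastSquares

def khatriRaoSq {m n R : Type*} [Mul R] (A : Matrix m n R) : Matrix (m × m) n R :=
  Matrix.of fun p j => A p.1 j * A p.2 j

theorem khatriRaoSq_mulVec_apply {m n R : Type*} [Fintype n] [CommSemiring R] (A : Matrix m n R)
    (x : n → R) (k l : m) : (khatriRaoSq A *ᵥ x) (k, l) = (A *ᵥ (A l * x)) k := by
  simp only [khatriRaoSq, Matrix.mulVec, dotProduct, Matrix.of_apply, Pi.mul_apply, mul_assoc]

variable {m n : Type*} [Fintype m] [Fintype n]

theorem Matrix.existsUnique_sum_sq_mulVec_sub_le {B : Matrix m n ℝ} (hB : Injective B.mulVec)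
    (b : m → ℝ) : ∃! ξ, ∀ ξ', ∑ i, (B *ᵥ ξ - b) i ^ 2 ≤ ∑ i, (B *ᵥ ξ' - b) i ^ 2 := by
  let f : (n → ℝ) →ₗ[ℝ] EuclideanSpace ℝ m :=
    (WithLp.linearEquiv 2 ℝ (m → ℝ)).symm.toLinearMap ∘ₗ B.mulVecLin
  have hf : Injective f := (WithLp.linearEquiv 2 ℝ (m → ℝ)).symm.injective.comp hB
  have norm_sq (ξ : n → ℝ) : ‖f ξ - WithLp.toLp 2 b‖ ^ 2 = ∑ i, (B *ᵥ ξ - b) i ^ 2 := by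
    rw [EuclideanSpace.real_norm_sq_eq]; rfl
  refine (existsUnique_congr fun ξ => forall_congr' fun ξ' => ?_).1
    (f.existsUnique_norm_sub_le_of_injective hf (WithLp.toLp 2 b))
  rw [← norm_sq, ← norm_sq]
  exact (pow_le_pow_iff_left₀ (norm_nonneg _) (norm_nonneg _) two_ne_zero).symm

-- The constants `c ≥ 0` with `c * ‖x‖ ≤ ‖A x‖` for the Euclidean norms, in squared form.
def normLowerBounds (A : Matrix m n ℝ) : Set ℝ :=
  {c | 0 ≤ c ∧ ∀ x : n → ℝ, c ^ 2 * ∑ j, x j ^ 2 ≤ ∑ i, (A *ᵥ x) i ^ 2}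

theorem sval_card_eq_sSup_normLowerBounds (A : Matrix m n ℝ) :
    sval A (Fintype.card n) = sSup (normLowerBounds A) := by
  have norm_le_iff {c : ℝ} (hc : 0 ≤ c) (x : n → ℝ) :
      c * ‖WithLp.toLp 2 x‖ ≤ ‖WithLp.toLp 2 (A *ᵥ x)‖ ↔
        c ^ 2 * ∑ j, x j ^ 2 ≤ ∑ i, (A *ᵥ x) i ^ 2 := by
    rw [← pow_le_pow_iff_left₀ (by positivity) (norm_nonneg _) two_ne_zero, mul_pow,
      EuclideanSpace.real_norm_sq_eq, EuclideanSpace.real_norm_sq_eq]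
  unfold sval
  congr 1
  ext c
  constructor
  · rintro ⟨hc, V, hV, hA⟩
    have hV : V = ⊤ := V.eq_top_of_finrank_eq
      (le_antisymm V.finrank_le (by rwa [finrank_euclideanSpace]))
    exact ⟨hc, fun x => (norm_le_iff hc x).1 (hA _ (hV ▸ Submodule.mem_top))⟩
  · rintro ⟨hc, hA⟩
    exact ⟨hc, ⊤, by rw [finrank_top, finrank_euclideanSpace],
      fun x _ => (norm_le_iff hc x.ofLp).2 (hA _)⟩

theorem zero_mem_normLowerBounds (A : Matrix m n ℝ) : 0 ∈ normLowerBounds A :=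
  ⟨le_rfl, fun x => by simpa using Finset.sum_nonneg fun i _ => sq_nonneg ((A *ᵥ x) i)⟩

theorem isClosed_normLowerBounds (A : Matrix m n ℝ) : IsClosed (normLowerBounds A) := by
  simp only [normLowerBounds, Set.ofPred_and, Set.ofPred_forall]
  exact isClosed_Ici.inter <| isClosed_iInter fun _ => isClosed_le (by fun_prop) continuous_const

theorem bddAbove_normLowerBounds [Nonempty n] (A : Matrix m n ℝ) :
    BddAbove (normLowerBounds A) := by
  classical
  obtain ⟨j⟩ := ‹Nonempty n›
  refine ⟨√(∑ i, A i j ^ 2), fun c ⟨_, hA⟩ => Real.le_sqrt_of_sq_le ?_⟩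
  simpa [Pi.single_apply] using hA (Pi.single j 1)

theorem sval_card_mem_normLowerBounds (A : Matrix m n ℝ) :
    sval A (Fintype.card n) ∈ normLowerBounds A := by
  rw [sval_card_eq_sSup_normLowerBounds]
  by_cases h : BddAbove (normLowerBounds A)
  · exact (isClosed_normLowerBounds A).csSup_mem ⟨0, zero_mem_normLowerBounds A⟩ h
  · simpa [Real.sSup_of_not_bddAbove h] using zero_mem_normLowerBounds A

theorem le_sval_card [Nonempty n] {A : Matrix m n ℝ} {c : ℝ} (hc : c ∈ normLowerBounds A) :
    c ≤ sval A (Fintype.card n) := by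
  rw [sval_card_eq_sSup_normLowerBounds]
  exact le_csSup (bddAbove_normLowerBounds A) hc

theorem nonempty_of_sval_card_pos {A : Matrix m n ℝ} (h : 0 < sval A (Fintype.card n)) :
    Nonempty n := by
  by_contra hn
  rw [not_nonempty_iff] at hn
  -- Without columns every `c ≥ 0` qualifies, and `sSup` of the unbounded set is the junk value `0`.
  have : ¬BddAbove (normLowerBounds A) := by
    rintro ⟨u, hu⟩
    have : |u| + 1 ∈ normLowerBounds A := ⟨by positivity, fun x => by
      simpa using Finset.sum_nonneg fun i _ => sq_nonneg ((A *ᵥ x) i)⟩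
    linarith [hu this, le_abs_self u]
  rw [sval_card_eq_sSup_normLowerBounds, Real.sSup_of_not_bddAbove this] at h
  exact h.false

theorem mulVec_injective_of_mem_normLowerBounds {A : Matrix m n ℝ} {c : ℝ} (hc : 0 < c)
    (hA : c ∈ normLowerBounds A) : Injective A.mulVec := by
  rw [← Matrix.coe_mulVecLin, ← LinearMap.ker_eq_bot, LinearMap.ker_eq_bot']
  intro x hx
  have h := hA.2 x
  rw [Matrix.mulVecLin_apply] at hx
  simp only [hx, Pi.zero_apply, zero_pow two_ne_zero, Finset.sum_const_zero] at h
  have hsum : ∑ j, x j ^ 2 = 0 :=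
    le_antisymm (nonpos_of_mul_nonpos_right h (by positivity)) (by positivity)
  funext j
  simpa using congrFun ((Fintype.sum_eq_zero_iff_of_nonneg fun j => sq_nonneg (x j)).1 hsum) j

theorem sq_mem_normLowerBounds_khatriRaoSq {A : Matrix m n ℝ} {c : ℝ}
    (hA : c ∈ normLowerBounds A) : c ^ 2 ∈ normLowerBounds (khatriRaoSq A) := by
  classical
  obtain ⟨hc, hA⟩ := hA
  have col_norm_sq (j : n) : c ^ 2 ≤ ∑ i, A i j ^ 2 := by
    simpa [Pi.single_apply] using hA (Pi.single j 1)
  refine ⟨sq_nonneg c, fun x => ?_⟩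
  calc (c ^ 2) ^ 2 * ∑ j, x j ^ 2 = c ^ 2 * ∑ j, c ^ 2 * x j ^ 2 := by
        rw [← Finset.mul_sum]; ring
    _ ≤ c ^ 2 * ∑ j, (∑ l, A l j ^ 2) * x j ^ 2 := by
        gcongr with j; exact col_norm_sq j
    _ = ∑ l, c ^ 2 * ∑ j, (A l * x) j ^ 2 := by
        simp only [Finset.sum_mul, Pi.mul_apply, mul_pow, Finset.mul_sum]
        rw [Finset.sum_comm]
    _ ≤ ∑ l, ∑ k, (A *ᵥ (A l * x)) k ^ 2 := by
        gcongr with l; exact hA _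
    _ = ∑ p, (khatriRaoSq A *ᵥ x) p ^ 2 := by
        rw [Finset.sum_comm, ← Finset.univ_product_univ, Finset.sum_product]
        simp only [khatriRaoSq_mulVec_apply]

theorem stmt_16 (d r : ℕ) (A : Matrix (Fin d) (Fin r) ℝ) (hσ : 0 < sval A r) :
    (sval A r) ^ 2 ≤ sval (Matrix.of fun (p : Fin d × Fin d) i => A p.1 i * A p.2 i) r ∧
      ∀ b : Fin d × Fin d → ℝ, ∃! ξ : Fin r → ℝ, ∀ ξ' : Fin r → ℝ,
        ∑ p, ((Matrix.of fun (p : Fin d × Fin d) i => A p.1 i * A p.2 i).mulVec ξ p - b p) ^ 2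
          ≤ ∑ p, ((Matrix.of fun (p : Fin d × Fin d) i => A p.1 i * A p.2 i).mulVec ξ' p - b p) ^ 2 := by
  have : Nonempty (Fin r) := nonempty_of_sval_card_pos (A := A) (by rwa [Fintype.card_fin])
  have hA : sval A r ∈ normLowerBounds A := by
    simpa only [Fintype.card_fin] using sval_card_mem_normLowerBounds A
  have hB := sq_mem_normLowerBounds_khatriRaoSq hA
  have hσB := le_sval_card hB
  rw [Fintype.card_fin] at hσB
  refine ⟨hσB, fun b => ?_⟩
  exact (khatriRaoSq A).existsUnique_sum_sq_mulVec_sub_le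
    (mulVec_injective_of_mem_normLowerBounds (by positivity) hB) b
end
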